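/- arXiv:1703.05001 — 6 statements merged into one kernel-verified Lean document; each statement's English description precedes it below -/
import Mathlib

section
/- Assume Ω is nonempty and inf_{x∈Ω} q(x) > −∞. Then every d ∈ Ω₁^∞ satisfies dᵀQd ≥ 0. (Lemma 3.2, first part.) -/
open Matrix Filter Topology

/-- Euclidean norm of a finitely-indexed real vector. -/
noncomputable def vnorm {ι : Type*} [Fintype ι] (v : ι → ℝ) : ℝ :=
  Real.sqrt (v ⬝ᵥ v)

/-- Membership in the (possibly unbounded) box `Ω = {x | l ≤ x ≤ u}`,
with extended-real bounds. -/
def inBox {n : ℕ} (l u : Fin n → EReal) (x : Fin n → ℝ) : Prop :=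
  ∀ j, l j ≤ (x j : EReal) ∧ (x j : EReal) ≤ u j

/-- `d` is a recession direction of the box `Ω`. -/
def recDir {n : ℕ} (l u : Fin n → EReal) (d : Fin n → ℝ) : Prop :=
  ∀ x, inBox l u x → ∀ α : ℝ, 0 ≤ α → inBox l u (x + α • d)

/-- The quadratic objective `q(x) = ½ xᵀQx + rᵀx`. -/
noncomputable def qf {n : ℕ} (Q : Matrix (Fin n) (Fin n) ℝ) (r : Fin n → ℝ)
    (x : Fin n → ℝ) : ℝ :=
  (1 / 2) * (x ⬝ᵥ Q *ᵥ x) + r ⬝ᵥ x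

/-- Lemma 3.2 (first part): if `q` is bounded below on the nonempty box `Ω`, then
every unit recession direction `d ∈ Ω₁^∞` satisfies `dᵀQd ≥ 0`. -/
theorem recession_direction_nonneg_curvature {n : ℕ} (hn : 1 ≤ n)
    (l u : Fin n → EReal)
    (hl : ∀ j, l j ≠ ⊤) (hu : ∀ j, u j ≠ ⊥) (hlu : ∀ j, l j < u j)
    (Q : Matrix (Fin n) (Fin n) ℝ) (hQ : Q.IsSymm) (r : Fin n → ℝ)
    (hne : ∃ x, inBox l u x)
    (hbdd : ∃ B : ℝ, ∀ z, inBox l u z → B ≤ qf Q r z)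
    (d : Fin n → ℝ) (hd : recDir l u d) (hd1 : vnorm d = 1) :
    0 ≤ d ⬝ᵥ Q *ᵥ d := by
  by_contra hneg
  push_neg at hneg
  obtain ⟨x, hx⟩ := hne
  obtain ⟨B, hB⟩ := hbdd
  set c : ℝ := d ⬝ᵥ Q *ᵥ d with hc
  set b : ℝ := (1/2) * (x ⬝ᵥ Q *ᵥ d + d ⬝ᵥ Q *ᵥ x) + r ⬝ᵥ d with hb
  set A : ℝ := qf Q r x with hA
  have key : ∀ α : ℝ, qf Q r (x + α • d) = A + α * b + α^2 * ((1/2) * c) := by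
    intro α
    simp only [qf, hA, hb, hc, Matrix.mulVec_add, Matrix.mulVec_smul,
      dotProduct_add, add_dotProduct, dotProduct_smul, smul_dotProduct,
      smul_eq_mul]
    ring
  set α : ℝ := max 1 ((2*(|b| + |A - B| + 1))/(-c)) with hα
  have hα1 : (1:ℝ) ≤ α := le_max_left _ _
  have hα0 : (0:ℝ) ≤ α := le_trans zero_le_one hα1
  have hcpos : 0 < -c := by linarith
  have hα2 : (2*(|b| + |A - B| + 1)) ≤ α * (-c) := by
    rw [← div_le_iff₀ hcpos]
    exact le_max_right _ _
  have hmem := hd x hx α hα0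
  have hge := hB _ hmem
  rw [key α] at hge
  clear_value α A b c
  have h1 : α * c / 2 ≤ -(|b| + |A - B| + 1) := by linarith
  have h3 : α * (α * c / 2) ≤ α * (-(|b| + |A - B| + 1)) :=
    mul_le_mul_of_nonneg_left h1 hα0
  have h4 : α * b ≤ α * |b| := mul_le_mul_of_nonneg_left (le_abs_self b) hα0
  have h5 : |A - B| ≤ α * |A - B| := le_mul_of_one_le_left (abs_nonneg _) hα1
  have h2 : α ^ 2 * (1 / 2 * c) = α * (α * c / 2) := by ring
  have h6 : α * (-(|b| + |A - B| + 1)) = -(α * |b|) - α * |A - B| - α := by ring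
  have h7 := le_abs_self (A - B)
  linarith
end

section
/- Assume Ω is nonempty and inf_{x∈Ω} q(x) > −∞. If d ∈ Ω₁^∞ satisfies dᵀQd = 0, then (Qx + r)ᵀd ≥ 0 for every x ∈ Ω, and consequently q(x) ≤ q(x + αd) for every x ∈ Ω and every α ≥ 0. (Lemma 3.2, second part.) -/
open Matrix Filter Topology

lemma symm_dot {n : ℕ} (Q : Matrix (Fin n) (Fin n) ℝ) (hQ : Q.IsSymm)
    (x d : Fin n → ℝ) : x ⬝ᵥ Q *ᵥ d = (Q *ᵥ x) ⬝ᵥ d := by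
  rw [dotProduct_mulVec, ← Matrix.mulVec_transpose, hQ.eq]

lemma qf_expand {n : ℕ} (Q : Matrix (Fin n) (Fin n) ℝ) (hQ : Q.IsSymm)
    (r x d : Fin n → ℝ) (α : ℝ) :
    (1 / 2) * ((x + α • d) ⬝ᵥ Q *ᵥ (x + α • d)) + r ⬝ᵥ (x + α • d)
      = ((1 / 2) * (x ⬝ᵥ Q *ᵥ x) + r ⬝ᵥ x)
        + α * ((Q *ᵥ x + r) ⬝ᵥ d) + α ^ 2 * (1 / 2) * (d ⬝ᵥ Q *ᵥ d) := by
  simp only [mulVec_add, mulVec_smul, add_dotProduct, dotProduct_add,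
    smul_dotProduct, dotProduct_smul, smul_eq_mul]
  rw [symm_dot Q hQ x d, dotProduct_comm d (Q *ᵥ x)]
  ring

/-- Lemma 3.2 (second part): if `q` is bounded below on the nonempty box `Ω` and the
unit recession direction `d` satisfies `dᵀQd = 0`, then `(Qx + r)ᵀd ≥ 0` for every
`x ∈ Ω`, and consequently `q(x) ≤ q(x + αd)` for all `x ∈ Ω` and `α ≥ 0`. -/
theorem recession_direction_zero_curvature {n : ℕ} (hn : 1 ≤ n)
    (l u : Fin n → EReal)
    (hl : ∀ j, l j ≠ ⊤) (hu : ∀ j, u j ≠ ⊥) (hlu : ∀ j, l j < u j)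
    (Q : Matrix (Fin n) (Fin n) ℝ) (hQ : Q.IsSymm) (r : Fin n → ℝ)
    (hne : ∃ x, inBox l u x)
    (hbdd : ∃ B : ℝ, ∀ z, inBox l u z → B ≤ qf Q r z)
    (d : Fin n → ℝ) (hd : recDir l u d) (hd1 : vnorm d = 1)
    (hcurv : d ⬝ᵥ Q *ᵥ d = 0) :
    (∀ x, inBox l u x → 0 ≤ (Q *ᵥ x + r) ⬝ᵥ d) ∧
    (∀ x, inBox l u x → ∀ α : ℝ, 0 ≤ α → qf Q r x ≤ qf Q r (x + α • d)) := by

  obtain ⟨B, hB⟩ := hbdd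
  have key : ∀ x, inBox l u x → ∀ α : ℝ,
      qf Q r (x + α • d) = qf Q r x + α * ((Q *ᵥ x + r) ⬝ᵥ d) := by
    intro x hx α
    have := qf_expand Q hQ r x d α
    rw [hcurv] at this
    simp only [qf]
    rw [this]; ring
  have main : ∀ x, inBox l u x → 0 ≤ (Q *ᵥ x + r) ⬝ᵥ d := by
    intro x hx
    by_contra h
    push_neg at h
    set c := (Q *ᵥ x + r) ⬝ᵥ d with hc
    set α : ℝ := max 0 ((B - qf Q r x) / c + 1) with hα
    have hα0 : 0 ≤ α := le_max_left _ _
    have hmem := hd x hx α hα0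
    have hle := hB _ hmem
    rw [key x hx α] at hle
    have h2 : (B - qf Q r x) / c + 1 ≤ α := le_max_right _ _
    have h3 : α * c < B - qf Q r x := by
      have hcc : (B - qf Q r x) / c * c = B - qf Q r x :=
        div_mul_cancel₀ _ (ne_of_lt h)
      nlinarith
    linarith
  refine ⟨main, fun x hx α hα0 => ?_⟩
  rw [key x hx α]
  nlinarith [main x hx]
end

section
/- For every d ∈ Ω₁^∞ there exists ε_d > 0 such that for every f ∈ Ω₁^∞ with dist(f,d) ≤ ε_d one has f ∈ ri(span{f,d} ∩ Ω^∞), where span{f,d} denotes the linear span of f and d and ri denotes the relative interior (intrinsic interior) of a subset of ℝⁿ. (Lemma 3.3.) -/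
open Matrix Filter Topology

lemma recDir_iff {n : ℕ} (l u : Fin n → EReal)
    (hl : ∀ j, l j ≠ ⊤) (hu : ∀ j, u j ≠ ⊥) (hlu : ∀ j, l j < u j)
    (v : Fin n → ℝ) :
    recDir l u v ↔ ∀ j, (l j ≠ ⊥ → 0 ≤ v j) ∧ (u j ≠ ⊤ → v j ≤ 0) := by
  constructor
  · intro hv
    -- construct a point in the box
    have hx : ∀ j, ∃ r : ℝ, l j < (r : EReal) ∧ (r : EReal) < u j := by
      intro j
      obtain ⟨q, hq1, hq2⟩ := EReal.exists_rat_btwn_of_lt (hlu j)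
      exact ⟨(q : ℝ), by exact_mod_cast hq1, by exact_mod_cast hq2⟩
    choose x hx1 hx2 using hx
    have hxbox : inBox l u x := fun j => ⟨(hx1 j).le, (hx2 j).le⟩
    intro j
    constructor
    · intro hlj
      by_contra h
      push_neg at h
      set c : ℝ := (l j).toReal with hc
      have hcl : l j = (c : EReal) := (EReal.coe_toReal (hl j) hlj).symm
      have hcx : c ≤ x j := by
        have := (hx1 j).le
        rw [hcl] at this
        exact_mod_cast this
      set α : ℝ := (x j - c + 1) / (-v j) with hα
      have hαpos : 0 ≤ α := by
        apply div_nonneg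
        · linarith
        · linarith
      have := (hv x hxbox α hαpos j).1
      have hval : (x + α • v) j = x j + α * v j := by
        simp [Pi.add_apply, Pi.smul_apply, smul_eq_mul]
      rw [hval, hcl] at this
      have hxv : x j + α * v j = c - 1 := by
        have hne : -v j ≠ 0 := by linarith
        have h1 : α * (-v j) = x j - c + 1 := div_mul_cancel₀ _ hne
        have h2 : α * v j = -(α * (-v j)) := by ring
        linarith
      rw [hxv] at this
      have : c ≤ c - 1 := by exact_mod_cast this
      linarith
    · intro huj
      by_contra h
      push_neg at h
      set c : ℝ := (u j).toReal with hc
      have hcu : u j = (c : EReal) := (EReal.coe_toReal huj (hu j)).symm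
      have hcx : x j ≤ c := by
        have := (hx2 j).le
        rw [hcu] at this
        exact_mod_cast this
      set α : ℝ := (c - x j + 1) / (v j) with hα
      have hαpos : 0 ≤ α := by
        apply div_nonneg
        · linarith
        · linarith
      have := (hv x hxbox α hαpos j).2
      have hval : (x + α • v) j = x j + α * v j := by
        simp [Pi.add_apply, Pi.smul_apply, smul_eq_mul]
      rw [hval, hcu] at this
      have hxv : x j + α * v j = c + 1 := by
        have hne : v j ≠ 0 := by linarith
        have h1 : α * v j = c - x j + 1 := div_mul_cancel₀ _ hne
        linarith
      rw [hxv] at this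
      have : c + 1 ≤ c := by exact_mod_cast this
      linarith
  · intro hv x hx α hα j
    have hval : (x + α • v) j = x j + α * v j := by
      simp [Pi.add_apply, Pi.smul_apply, smul_eq_mul]
    rw [hval]
    constructor
    · by_cases hlj : l j = ⊥
      · rw [hlj]; exact bot_le
      · have h0 : 0 ≤ v j := (hv j).1 hlj
        have : x j ≤ x j + α * v j := by nlinarith
        calc l j ≤ (x j : EReal) := (hx j).1
          _ ≤ ((x j + α * v j : ℝ) : EReal) := by exact_mod_cast this
    · by_cases huj : u j = ⊤
      · rw [huj]; exact le_top
      · have h0 : v j ≤ 0 := (hv j).2 huj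
        have : x j + α * v j ≤ x j := by nlinarith
        calc ((x j + α * v j : ℝ) : EReal) ≤ (x j : EReal) := by exact_mod_cast this
          _ ≤ u j := (hx j).2

lemma dot_self_one {n : ℕ} {v : Fin n → ℝ} (h : vnorm v = 1) : v ⬝ᵥ v = 1 := by
  unfold vnorm at h
  exact Real.sqrt_eq_one.mp h

/-- Lemma 3.3: for every `d ∈ Ω₁^∞` there exists `ε_d > 0` such that any
`f ∈ Ω₁^∞` with `dist(f,d) = arccos(dᵀf) ≤ ε_d` lies in the relative interior
of `span{f,d} ∩ Ω^∞`. -/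
theorem near_recession_direction_mem_relint {n : ℕ} (hn : 1 ≤ n)
    (l u : Fin n → EReal)
    (hl : ∀ j, l j ≠ ⊤) (hu : ∀ j, u j ≠ ⊥) (hlu : ∀ j, l j < u j)
    (d : Fin n → ℝ) (hd : recDir l u d) (hd1 : vnorm d = 1) :
    ∃ ε : ℝ, 0 < ε ∧ ∀ f : Fin n → ℝ, recDir l u f → vnorm f = 1 →
      Real.arccos (d ⬝ᵥ f) ≤ ε →
      f ∈ intrinsicInterior ℝ
        ((Submodule.span ℝ {f, d} : Set (Fin n → ℝ)) ∩ {v | recDir l u v}) := by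
  have hdd : d ⬝ᵥ d = 1 := dot_self_one hd1
  -- d ≠ 0
  have hdne : ∃ j, d j ≠ 0 := by
    by_contra h
    push_neg at h
    have : d = 0 := funext fun j => h j
    rw [this] at hdd
    simp at hdd
  set T : Finset (Fin n) := Finset.univ.filter (fun j => d j ≠ 0) with hT
  have hTne : T.Nonempty := by
    obtain ⟨j, hj⟩ := hdne
    exact ⟨j, by simp [hT, hj]⟩
  set δ : ℝ := T.inf' hTne (fun j => |d j|) with hδdef
  have hδpos : 0 < δ := by
    rw [hδdef, Finset.lt_inf'_iff]
    intro j hj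
    have : d j ≠ 0 := by simpa [hT] using hj
    exact abs_pos.mpr this
  set ε : ℝ := min δ 1 / 2 with hε
  have hεpos : 0 < ε := by
    apply div_pos _ (by norm_num)
    exact lt_min hδpos one_pos
  have hεle1 : ε ≤ 1 / 2 := by
    rw [hε]
    have : min δ 1 ≤ 1 := min_le_right _ _
    linarith
  have hεltδ : ε < δ := by
    rw [hε]
    have : min δ 1 ≤ δ := min_le_left _ _
    linarith
  have hεπ : ε ≤ Real.pi := by
    have := Real.pi_gt_three
    linarith
  refine ⟨ε, hεpos, fun f hf hf1 hθ => ?_⟩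
  have hff : f ⬝ᵥ f = 1 := dot_self_one hf1
  -- key sign fact
  have key : ∀ j, f j = 0 → d j = 0 := by
    intro j hfj
    by_contra hdj
    have hδj : δ ≤ |d j| := by
      apply Finset.inf'_le
      simp [hT, hdj]
    -- bound on d ⬝ᵥ f
    have hcos : Real.cos ε ≤ d ⬝ᵥ f := by
      rcases le_or_gt (d ⬝ᵥ f) 1 with h1 | h1
      · rcases le_or_gt (-1) (d ⬝ᵥ f) with h2 | h2
        · have harc : Real.cos (Real.arccos (d ⬝ᵥ f)) = d ⬝ᵥ f :=
            Real.cos_arccos h2 h1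
          have := Real.cos_le_cos_of_nonneg_of_le_pi (Real.arccos_nonneg _) hεπ hθ
          linarith [this, harc.symm ▸ this]
        · exfalso
          have : Real.arccos (d ⬝ᵥ f) = Real.pi := Real.arccos_eq_pi.mpr h2.le
          rw [this] at hθ
          have := Real.pi_gt_three
          linarith
      · have := Real.cos_le_one ε
        linarith
    have hsum : (fun k => f k - d k) ⬝ᵥ (fun k => f k - d k) = 2 - 2 * (d ⬝ᵥ f) := by
      have hcomm : f ⬝ᵥ d = d ⬝ᵥ f := dotProduct_comm f d
      simp only [dotProduct] at hff hdd hcomm ⊢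
      have : ∀ k, (f k - d k) * (f k - d k) = f k * f k - f k * d k - d k * f k + d k * d k := by
        intro k; ring
      rw [Finset.sum_congr rfl (fun k _ => this k)]
      simp only [Finset.sum_add_distrib, Finset.sum_sub_distrib]
      rw [hff, hdd, hcomm]
      ring
    have hterm : (f j - d j) * (f j - d j) ≤ 2 - 2 * (d ⬝ᵥ f) := by
      rw [← hsum]
      simp only [dotProduct]
      apply Finset.single_le_sum (f := fun k => (f k - d k) * (f k - d k))
      · intro k _
        exact mul_self_nonneg _
      · exact Finset.mem_univ j
    have hcosε : 1 - ε ^ 2 / 2 ≤ Real.cos ε := Real.one_sub_sq_div_two_le_cos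
    have hεδ2 : ε ^ 2 < δ ^ 2 := by
      apply pow_lt_pow_left₀ hεltδ hεpos.le
      norm_num
    have hδdj : δ ^ 2 ≤ |d j| ^ 2 := by
      apply pow_le_pow_left₀ hδpos.le hδj
    have : (f j - d j) * (f j - d j) = |d j| ^ 2 := by
      rw [hfj]
      rw [sq_abs]
      ring
    nlinarith
  -- the set S
  set S : Set (Fin n → ℝ) :=
    (Submodule.span ℝ {f, d} : Set (Fin n → ℝ)) ∩ {v | recDir l u v} with hS
  have hfspan : f ∈ Submodule.span ℝ ({f, d} : Set (Fin n → ℝ)) :=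
    Submodule.subset_span (Set.mem_insert _ _)
  have hfS : f ∈ S := ⟨hfspan, hf⟩
  -- open set U
  set U : Set (Fin n → ℝ) :=
    {v | ∀ j, (0 < f j → 0 < v j) ∧ (f j < 0 → v j < 0)} with hUdef
  have hUopen : IsOpen U := by
    have : U = ⋂ j, ({v : Fin n → ℝ | 0 < f j → 0 < v j} ∩ {v | f j < 0 → v j < 0}) := by
      ext v
      simp [hUdef, Set.mem_iInter, forall_and]
    rw [this]
    apply isOpen_iInter_of_finite
    intro j
    apply IsOpen.inter
    · by_cases h : 0 < f j
      · have : {v : Fin n → ℝ | 0 < f j → 0 < v j} = {v | 0 < v j} := by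
          ext v; simp [h]
        rw [this]
        exact isOpen_lt continuous_const (continuous_apply j)
      · have : {v : Fin n → ℝ | 0 < f j → 0 < v j} = Set.univ := by
          ext v; simp [h]
        rw [this]; exact isOpen_univ
    · by_cases h : f j < 0
      · have : {v : Fin n → ℝ | f j < 0 → v j < 0} = {v | v j < 0} := by
          ext v; simp [h]
        rw [this]
        exact isOpen_lt (continuous_apply j) continuous_const
      · have : {v : Fin n → ℝ | f j < 0 → v j < 0} = Set.univ := by
          ext v; simp [h]
        rw [this]; exact isOpen_univ
  have hfU : f ∈ U := fun j => ⟨fun h => h, fun h => h⟩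
  -- main inclusion
  have hsub : ∀ v ∈ U, v ∈ (Submodule.span ℝ ({f, d} : Set (Fin n → ℝ)) : Set (Fin n → ℝ)) →
      recDir l u v := by
    intro v hvU hvV
    obtain ⟨a, b, hab⟩ := Submodule.mem_span_pair.mp hvV
    have hvj : ∀ j, v j = a * f j + b * d j := by
      intro j
      have := congrFun hab j
      simpa [Pi.add_apply, Pi.smul_apply, smul_eq_mul] using this.symm
    rw [recDir_iff l u hl hu hlu]
    have hfrec := (recDir_iff l u hl hu hlu f).mp hf
    intro j
    constructor
    · intro hlj
      have hf0 : 0 ≤ f j := (hfrec j).1 hlj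
      rcases lt_or_eq_of_le hf0 with h | h
      · exact ((hvU j).1 h).le
      · have hfj0 : f j = 0 := h.symm
        have hdj0 : d j = 0 := key j hfj0
        rw [hvj j, hfj0, hdj0]
        simp
    · intro huj
      have hf0 : f j ≤ 0 := (hfrec j).2 huj
      rcases lt_or_eq_of_le hf0 with h | h
      · exact ((hvU j).2 h).le
      · have hfj0 : f j = 0 := h
        have hdj0 : d j = 0 := key j hfj0
        rw [hvj j, hfj0, hdj0]
        simp
  -- conclude
  rw [mem_intrinsicInterior]
  refine ⟨⟨f, subset_affineSpan ℝ S hfS⟩, ?_, rfl⟩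
  have hspanle : affineSpan ℝ S ≤ (Submodule.span ℝ ({f, d} : Set (Fin n → ℝ))).toAffineSubspace := by
    apply affineSpan_le.mpr
    intro v hv
    exact hv.1
  have hincl : ((↑) ⁻¹' U : Set (affineSpan ℝ S)) ⊆ ((↑) ⁻¹' S : Set (affineSpan ℝ S)) := by
    intro z hz
    have hzspan : (z : Fin n → ℝ) ∈ Submodule.span ℝ ({f, d} : Set (Fin n → ℝ)) := by
      have := hspanle z.2
      exact this
    exact ⟨hzspan, hsub z hz hzspan⟩
  exact interior_maximal hincl (hUopen.preimage continuous_subtype_val) hfU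
end

section
/- Let S ⊆ {1,…,n} be an index set, γ > 0, and x̄, x, x′ ∈ ℝⁿ such that: x′_j = x̄_j for every j ∉ S; (Qx̄ + r)_j = 0 for every j ∈ S; and (Qx′ + r)_j + γ(x′_j − x_j) = 0 for every j ∈ S. If Q_{SS} + γI is positive definite (hence invertible), then the restriction to S satisfies (x′ − x̄)|_S = γ(Q_{SS} + γI)^{−1} (x − x̄)|_S; i.e. once the active set is fixed, the proximal point iteration is the linear iteration with matrix M = γ(Q_{SS} + γI)^{−1} on the free coordinates. (Identity (3.15) in the proof of Theorem 3.6.) -/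
open Matrix Filter Topology

/-- Identity (3.15): once the active set is fixed, the proximal point iteration is
the linear iteration with matrix `M = γ(Q_SS + γI)⁻¹` on the free coordinates. -/
theorem ppa_linear_iteration_on_free_coordinates {n : ℕ}
    (Q : Matrix (Fin n) (Fin n) ℝ) (hQ : Q.IsSymm) (r : Fin n → ℝ)
    (S : Finset (Fin n)) (γ : ℝ) (hγ : 0 < γ)
    (xbar x x' : Fin n → ℝ)
    (hout : ∀ j ∉ S, x' j = xbar j)
    (hbar : ∀ j ∈ S, (Q *ᵥ xbar + r) j = 0)
    (hit : ∀ j ∈ S, (Q *ᵥ x' + r) j + γ * (x' j - x j) = 0)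
    (hpd : (Q.submatrix (Subtype.val : {j // j ∈ S} → Fin n) Subtype.val
        + γ • (1 : Matrix {j // j ∈ S} {j // j ∈ S} ℝ)).PosDef) :
    (fun j : {j // j ∈ S} => x' j - xbar j) =
      γ • ((Q.submatrix (Subtype.val : {j // j ∈ S} → Fin n) Subtype.val
          + γ • (1 : Matrix {j // j ∈ S} {j // j ∈ S} ℝ))⁻¹ *ᵥ
        fun j : {j // j ∈ S} => x j - xbar j) := by
  set A : Matrix {j // j ∈ S} {j // j ∈ S} ℝ :=
    Q.submatrix (Subtype.val : {j // j ∈ S} → Fin n) Subtype.val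
      + γ • (1 : Matrix {j // j ∈ S} {j // j ∈ S} ℝ) with hA
  set d : {j // j ∈ S} → ℝ := fun j => x' j - xbar j with hd
  set v : {j // j ∈ S} → ℝ := fun j => x j - xbar j with hv
  have hdet : IsUnit A.det := isUnit_iff_ne_zero.mpr hpd.det_pos.ne'
  have key : A *ᵥ d = γ • v := by
    funext j
    have h1 := hbar j j.2
    have h2 := hit j j.2
    simp only [Pi.add_apply] at h1 h2
    have hsum : ∑ k : {j // j ∈ S}, Q j.val k.val * d k
        = (Q *ᵥ x') j.val - (Q *ᵥ xbar) j.val := by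
      have e1 : ∑ k : {j // j ∈ S}, Q j.val k.val * d k
          = ∑ k ∈ S, Q j.val k * (x' k - xbar k) :=
        Finset.sum_coe_sort S (fun k => Q j.val k * (x' k - xbar k))
      have e2 : ∑ k ∈ S, Q j.val k * (x' k - xbar k)
          = ∑ k : Fin n, Q j.val k * (x' k - xbar k) := by
        apply Finset.sum_subset (Finset.subset_univ S)
        intro k _ hk
        simp [hout k hk]
      rw [e1, e2]
      simp [Matrix.mulVec, dotProduct, mul_sub, Finset.sum_sub_distrib]
    have hdiff : (Q *ᵥ x') j.val - (Q *ᵥ xbar) j.val = -(γ * (x' j.val - x j.val)) := by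
      linarith
    show ∑ k : {j // j ∈ S}, A j k * d k = γ * v j
    have hAexp : ∑ k : {j // j ∈ S}, A j k * d k
        = (∑ k : {j // j ∈ S}, Q j.val k.val * d k) + γ * d j := by
      rw [hA]
      simp only [Matrix.add_apply, Matrix.smul_apply, Matrix.one_apply,
        Matrix.submatrix_apply, add_mul, Finset.sum_add_distrib, smul_eq_mul]
      congr 1
      simp [ite_mul, mul_ite, Finset.sum_ite_eq]
    rw [hAexp, hsum, hdiff]
    show _ = γ * (x j.val - xbar j.val)
    have : d j = x' j.val - xbar j.val := rfl
    rw [this]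
    ring
  calc d = A⁻¹ *ᵥ (A *ᵥ d) := by
        rw [Matrix.mulVec_mulVec, Matrix.nonsing_inv_mul _ hdet, Matrix.one_mulVec]
    _ = γ • (A⁻¹ *ᵥ v) := by rw [key, Matrix.mulVec_smul]
end

section
/- Let A be an n×n real symmetric positive definite matrix and v ∈ ℝⁿ. If ‖A^k v‖ → 0 as k → ∞, then there exists ρ ∈ (0,1) such that ‖A^k v‖ ≤ ρ‖A^{k−1} v‖ for every k ≥ 1. (Lemma 3.7, first part.) -/
open Matrix Filter Topology

/-- Lemma 3.7 (first part): if `A` is symmetric positive definite and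
`‖A^k v‖ → 0`, then there exists `ρ ∈ (0,1)` with
`‖A^k v‖ ≤ ρ‖A^{k−1} v‖` for every `k ≥ 1`. -/
theorem posdef_power_contraction {n : ℕ}
    (A : Matrix (Fin n) (Fin n) ℝ) (hA : A.IsSymm) (hpd : A.PosDef)
    (v : Fin n → ℝ)
    (hto : Tendsto (fun k : ℕ => vnorm ((A ^ k) *ᵥ v)) atTop (𝓝 0)) :
    ∃ ρ : ℝ, 0 < ρ ∧ ρ < 1 ∧ ∀ k : ℕ, 1 ≤ k →
      vnorm ((A ^ k) *ᵥ v) ≤ ρ * vnorm ((A ^ (k - 1)) *ᵥ v) := by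
  classical
  by_cases hv : v = 0
  · refine ⟨1/2, by norm_num, by norm_num, fun k hk => ?_⟩
    simp [hv, Matrix.mulVec_zero, vnorm]
  have hH : A.IsHermitian := hpd.1
  set b := hH.eigenvectorBasis with hb
  set lam := hH.eigenvalues with hlam
  -- key diagonalization step
  have key : ∀ (x : EuclideanSpace ℝ (Fin n)) (i : Fin n),
      b.repr ((WithLp.equiv 2 (Fin n → ℝ)).symm (A *ᵥ (WithLp.equiv 2 (Fin n → ℝ)) x)) i = lam i * b.repr x i := by
    intro x i
    rw [OrthonormalBasis.repr_apply_apply, OrthonormalBasis.repr_apply_apply]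
    simp only [PiLp.inner_apply, RCLike.inner_apply, conj_trivial, WithLp.equiv_symm_apply, PiLp.toLp_apply]
    simp only [mul_comm _ ((b i).ofLp _)]
    have h1 : (∑ j, (b i : Fin n → ℝ) j * (A *ᵥ (WithLp.equiv 2 (Fin n → ℝ)) x) j)
        = (b i : Fin n → ℝ) ⬝ᵥ (A *ᵥ (WithLp.equiv 2 (Fin n → ℝ)) x) := rfl
    have h2 : A *ᵥ (b i : Fin n → ℝ)
        = lam i • (b i : Fin n → ℝ) := hH.mulVec_eigenvectorBasis i
    rw [h1, dotProduct_mulVec, ← mulVec_transpose, hA.eq, h2, smul_dotProduct]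
    simp [dotProduct, smul_eq_mul]
  set c : Fin n → ℝ := fun i => b.repr ((WithLp.equiv 2 (Fin n → ℝ)).symm v) i with hc
  have hrep : ∀ (k : ℕ) (i : Fin n),
      b.repr ((WithLp.equiv 2 (Fin n → ℝ)).symm ((A ^ k) *ᵥ v)) i = lam i ^ k * c i := by
    intro k
    induction k with
    | zero => intro i; simp [hc, Matrix.one_mulVec]
    | succ k ih =>
      intro i
      have hstep : (A ^ (k + 1)) *ᵥ v = A *ᵥ ((A ^ k) *ᵥ v) := by
        rw [pow_succ', Matrix.mulVec_mulVec]
      have := key ((WithLp.equiv 2 (Fin n → ℝ)).symm ((A ^ k) *ᵥ v)) i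
      rw [Equiv.apply_symm_apply] at this
      rw [hstep, this, ih i, pow_succ']
      ring
  -- vnorm as euclidean norm of coordinates
  have hvn : ∀ w : Fin n → ℝ, vnorm w = ‖(WithLp.equiv 2 (Fin n → ℝ)).symm w‖ := by
    intro w
    rw [EuclideanSpace.norm_eq]
    simp [vnorm, dotProduct, sq_abs, pow_two, WithLp.equiv_symm_apply, PiLp.toLp_apply]
  have hnorm : ∀ k : ℕ,
      vnorm ((A ^ k) *ᵥ v) = Real.sqrt (∑ i, (lam i ^ k * c i) ^ 2) := by
    intro k
    rw [hvn, ← b.repr.norm_map, EuclideanSpace.norm_eq]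
    congr 1
    refine Finset.sum_congr rfl fun i _ => ?_
    rw [hrep k i, Real.norm_eq_abs, sq_abs]
  -- the support of c
  set S : Finset (Fin n) := Finset.univ.filter (fun i => c i ≠ 0) with hS
  have hSne : S.Nonempty := by
    by_contra h
    rw [Finset.not_nonempty_iff_eq_empty, Finset.filter_eq_empty_iff] at h
    apply hv
    have : (WithLp.equiv 2 (Fin n → ℝ)).symm v = 0 := by
      apply b.repr.injective
      ext i
      simpa [hc] using h (Finset.mem_univ i)
    simpa using congrArg (WithLp.equiv 2 (Fin n → ℝ)) this
  set ρ : ℝ := S.sup' hSne lam with hρ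
  obtain ⟨i₀, hi₀S, hi₀⟩ := S.exists_mem_eq_sup' hSne lam
  have hi₀' : ρ = lam i₀ := hρ.trans hi₀
  have hci₀ : c i₀ ≠ 0 := (Finset.mem_filter.mp hi₀S).2
  have hρpos : 0 < ρ := by
    rw [hi₀']; exact hpd.eigenvalues_pos i₀
  have hlam₀ : 0 < lam i₀ := by rw [← hi₀']; exact hρpos
  have hlower : ∀ k : ℕ, ρ ^ k * |c i₀| ≤ vnorm ((A ^ k) *ᵥ v) := by
    intro k
    rw [hnorm k]
    have h1 : (lam i₀ ^ k * c i₀) ^ 2 ≤ ∑ i, (lam i ^ k * c i) ^ 2 :=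
      Finset.single_le_sum (f := fun i => (lam i ^ k * c i) ^ 2) (fun i _ => sq_nonneg _) (Finset.mem_univ i₀)
    calc ρ ^ k * |c i₀| = |lam i₀ ^ k * c i₀| := by
          rw [hi₀', abs_mul, abs_pow, abs_of_pos hlam₀]
      _ = Real.sqrt ((lam i₀ ^ k * c i₀) ^ 2) := (Real.sqrt_sq_eq_abs _).symm
      _ ≤ _ := Real.sqrt_le_sqrt h1
  have hρlt : ρ < 1 := by
    by_contra h
    push_neg at h
    have hineq : ∀ k : ℕ, |c i₀| ≤ vnorm ((A ^ k) *ᵥ v) := by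
      intro k
      refine le_trans ?_ (hlower k)
      nlinarith [one_le_pow₀ h (n := k), abs_nonneg (c i₀)]
    have := ge_of_tendsto hto (Eventually.of_forall hineq)
    have := abs_pos.mpr hci₀
    linarith
  refine ⟨ρ, hρpos, hρlt, fun k hk => ?_⟩
  obtain ⟨m, rfl⟩ : ∃ m, k = m + 1 := ⟨k - 1, (Nat.succ_pred_eq_of_pos hk).symm⟩
  have hm : m + 1 - 1 = m := rfl
  rw [hm, hnorm, hnorm]
  have hsum : (∑ i, (lam i ^ (m + 1) * c i) ^ 2) ≤ ρ ^ 2 * ∑ i, (lam i ^ m * c i) ^ 2 := by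
    rw [Finset.mul_sum]
    refine Finset.sum_le_sum fun i _ => ?_
    by_cases hci : c i = 0
    · simp [hci]
    · have hiS : i ∈ S := Finset.mem_filter.mpr ⟨Finset.mem_univ i, hci⟩
      have hle : lam i ≤ ρ := Finset.le_sup' lam hiS
      have hnn : 0 ≤ lam i := (hpd.eigenvalues_pos i).le
      have h1 : (lam i ^ (m + 1) * c i) ^ 2 = lam i ^ 2 * (lam i ^ m * c i) ^ 2 := by ring
      rw [h1]
      exact mul_le_mul_of_nonneg_right (pow_le_pow_left₀ hnn hle 2) (sq_nonneg _)
  calc Real.sqrt (∑ i, (lam i ^ (m + 1) * c i) ^ 2)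
      ≤ Real.sqrt (ρ ^ 2 * ∑ i, (lam i ^ m * c i) ^ 2) := Real.sqrt_le_sqrt hsum
    _ = ρ * Real.sqrt (∑ i, (lam i ^ m * c i) ^ 2) := by
        rw [Real.sqrt_mul (sq_nonneg ρ), Real.sqrt_sq hρpos.le]
end

section
/- Let x⁰, x¹, … be a PPA sequence for min_{x∈Ω} q(x) with inf_{x∈Ω} q(x) > −∞, converging to a KKT point x̄ at which the strict complementarity conditions hold. Let S = A_m(x̄) = {j : l_j < x̄_j < u_j}, s = |S|, let λ̄_1 ≥ ⋯ ≥ λ̄_s be the eigenvalues of Q_{SS} with corresponding orthonormal eigenvectors v̄_1, …, v̄_s, and let N be such that for every k ≥ N the active sets of x^k coincide with those of x̄ (x^k_j = l_j iff x̄_j = l_j, x^k_j = u_j iff x̄_j = u_j). If v̄_sᵀ((x^{N+1} − x^N)|_S) ≠ 0, then Q_{SS} is positive definite. (Theorem 3.9, first part.) -/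
open Matrix Filter Topology

/-- `xbar` is a KKT point at which the strict complementarity conditions hold. -/
def kktStrict {n : ℕ} (l u : Fin n → EReal) (Q : Matrix (Fin n) (Fin n) ℝ)
    (r : Fin n → ℝ) (xbar : Fin n → ℝ) : Prop :=
  ∀ j, ((xbar j : EReal) = l j → 0 < (Q *ᵥ xbar + r) j) ∧
    (l j < (xbar j : EReal) ∧ (xbar j : EReal) < u j → (Q *ᵥ xbar + r) j = 0) ∧
    ((xbar j : EReal) = u j → (Q *ᵥ xbar + r) j < 0)

lemma quad_coeff_zero (g C ε : ℝ) (hε : 0 < ε)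
    (h : ∀ t : ℝ, |t| ≤ ε → 0 ≤ t * g + t ^ 2 * C) : g = 0 := by
  by_contra hg
  set m : ℝ := min (ε / |g|) (1 / (2 * |C| + 1)) with hm
  have hgpos : 0 < |g| := abs_pos.mpr hg
  have hmpos : 0 < m := lt_min (div_pos hε hgpos) (by positivity)
  have hm1 : m ≤ ε / |g| := min_le_left _ _
  have hm2 : m ≤ 1 / (2 * |C| + 1) := min_le_right _ _
  have ht : |(-g * m)| ≤ ε := by
    rw [abs_mul, abs_neg, abs_of_pos hmpos]
    calc |g| * m ≤ |g| * (ε / |g|) := by nlinarith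
    _ = ε := by field_simp
  have hkey := h (-g * m) ht
  have hC : C ≤ |C| := le_abs_self C
  have hmC : m * (2 * |C| + 1) ≤ 1 := by
    rw [le_div_iff₀ (by positivity)] at hm2; linarith
  have hg2 : 0 < g ^ 2 := by positivity
  nlinarith [mul_pos hg2 hmpos, mul_nonneg hmpos.le (abs_nonneg C),
    mul_pos (mul_pos hg2 hmpos) hmpos]

lemma dot_symm_mulVec {ι : Type*} [Fintype ι] (A : Matrix ι ι ℝ) (hA : Aᵀ = A)
    (x y : ι → ℝ) : x ⬝ᵥ A *ᵥ y = (A *ᵥ x) ⬝ᵥ y := by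
  rw [Matrix.dotProduct_mulVec, ← Matrix.mulVec_transpose, hA]

lemma ortho_span {m : ℕ} {ι : Type*} [Fintype ι] [DecidableEq ι]
    (hcard : Fintype.card ι = m)
    (v : Fin m → ι → ℝ)
    (hortho : ∀ i i', v i ⬝ᵥ v i' = if i = i' then (1:ℝ) else 0)
    (y : ι → ℝ) (j : ι) : ∑ i, (v i ⬝ᵥ y) * v i j = y j := by
  classical
  let e : Fin m ≃ ι := (Fintype.equivFinOfCardEq hcard).symm
  set W : Matrix (Fin m) (Fin m) ℝ := fun i k => v i (e k) with hW
  have h1 : W * Wᵀ = 1 := by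
    ext i i'
    rw [Matrix.mul_apply]
    have := hortho i i'
    rw [dotProduct] at this
    rw [← Equiv.sum_comp e (fun j => v i j * v i' j)] at this
    rw [Matrix.one_apply]; exact this
  have h2 : Wᵀ * W = 1 := mul_eq_one_comm.mp h1
  obtain ⟨k, rfl⟩ : ∃ k, e k = j := ⟨e.symm j, e.apply_symm_apply j⟩
  have key : ∀ i, v i ⬝ᵥ y = ∑ k', W i k' * y (e k') := by
    intro i
    rw [dotProduct, ← Equiv.sum_comp e (fun j => v i j * y j)]
  calc ∑ i, (v i ⬝ᵥ y) * v i (e k)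
      = ∑ i, ∑ k', W i k' * y (e k') * W i k := by
        simp only [key]; congr 1; ext i; rw [Finset.sum_mul]
    _ = ∑ k', (∑ i, Wᵀ k' i * W i k) * y (e k') := by
        rw [Finset.sum_comm]; congr 1; ext k'
        rw [Finset.sum_mul]; congr 1; ext i; simp [Matrix.transpose_apply]; ring
    _ = y (e k) := by
        have : ∀ k', (∑ i, Wᵀ k' i * W i k) = (1 : Matrix (Fin m) (Fin m) ℝ) k' k := by
          intro k'; rw [← h2, Matrix.mul_apply]
        simp only [this, Matrix.one_apply]
        simp

lemma posdef_of_eig {m : ℕ} {ι : Type*} [Fintype ι] [DecidableEq ι]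
    (hcard : Fintype.card ι = m)
    (A : Matrix ι ι ℝ) (hA : Aᵀ = A) (lam : Fin m → ℝ) (v : Fin m → ι → ℝ)
    (heig : ∀ i, A *ᵥ v i = lam i • v i)
    (hortho : ∀ i i', v i ⬝ᵥ v i' = if i = i' then (1:ℝ) else 0)
    (hpos : ∀ i, 0 < lam i) : A.PosDef := by
  refine Matrix.PosDef.of_dotProduct_mulVec_pos ?_ ?_
  · have h : Aᴴ = Aᵀ := by ext i j; simp [Matrix.conjTranspose_apply]
    rw [Matrix.IsHermitian, h, hA]
  · intro y hy
    have expand : y ⬝ᵥ A *ᵥ y = ∑ i, lam i * (v i ⬝ᵥ y) ^ 2 := by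
      conv_lhs => rw [dotProduct]
      calc ∑ j, y j * (A *ᵥ y) j
          = ∑ j, (∑ i, (v i ⬝ᵥ y) * v i j) * (A *ᵥ y) j := by
            congr 1; ext j; rw [ortho_span hcard v hortho y j]
        _ = ∑ j, ∑ i, (v i ⬝ᵥ y) * v i j * (A *ᵥ y) j := by
            congr 1; ext j; rw [Finset.sum_mul]
        _ = ∑ i, ∑ j, (v i ⬝ᵥ y) * v i j * (A *ᵥ y) j := Finset.sum_comm
        _ = ∑ i, (v i ⬝ᵥ y) * (v i ⬝ᵥ A *ᵥ y) := by
            congr 1; ext i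
            have hd : v i ⬝ᵥ (A *ᵥ y) = ∑ j, v i j * (A *ᵥ y) j := rfl
            rw [hd, Finset.mul_sum]
            congr 1; ext j; ring
        _ = ∑ i, lam i * (v i ⬝ᵥ y) ^ 2 := by
            congr 1; ext i
            rw [dot_symm_mulVec A hA, heig i, smul_dotProduct]
            have : v i ⬝ᵥ y = y ⬝ᵥ v i := dotProduct_comm _ _
            rw [smul_eq_mul, this]; ring
    have hex : ∃ i, v i ⬝ᵥ y ≠ 0 := by
      by_contra hall
      push_neg at hall
      apply hy
      ext j
      rw [← ortho_span hcard v hortho y j]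
      simp [hall]
    obtain ⟨i0, hi0⟩ := hex
    have : 0 < ∑ i, lam i * (v i ⬝ᵥ y) ^ 2 := by
      apply Finset.sum_pos' (fun i _ => mul_nonneg (hpos i).le (sq_nonneg _))
      exact ⟨i0, Finset.mem_univ _, mul_pos (hpos i0) (by positivity)⟩
    simpa [Matrix.PosDef, expand] using this

lemma vnorm_sq {ι : Type*} [Fintype ι] (w : ι → ℝ) : vnorm w ^ 2 = w ⬝ᵥ w := by
  apply Real.sq_sqrt
  exact Finset.sum_nonneg fun i _ => mul_self_nonneg _

lemma update_eq_add_single {n : ℕ} (y : Fin n → ℝ) (j : Fin n) (t : ℝ) :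
    Function.update y j (y j + t) = y + t • (Pi.single j 1 : Fin n → ℝ) := by
  ext i
  by_cases h : i = j
  · subst h; simp
  · simp [Function.update_of_ne h, Pi.single_eq_of_ne h]

lemma qf_update {n : ℕ} (Q : Matrix (Fin n) (Fin n) ℝ) (hQ : Qᵀ = Q)
    (r : Fin n → ℝ) (y : Fin n → ℝ) (j : Fin n) (t : ℝ) :
    qf Q r (Function.update y j (y j + t)) =
      qf Q r y + t * ((Q *ᵥ y + r) j) + t ^ 2 * (Q j j / 2) := by
  rw [update_eq_add_single]
  have hsym : y ⬝ᵥ Q *ᵥ (t • (Pi.single j 1 : Fin n → ℝ)) = t * (Q *ᵥ y) j := by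
    rw [dot_symm_mulVec Q hQ, dotProduct_smul, dotProduct_single]
    simp [mul_comm]
  unfold qf
  rw [Matrix.mulVec_add, add_dotProduct, dotProduct_add,
    dotProduct_add, hsym]
  rw [smul_dotProduct, single_dotProduct]
  rw [Matrix.mulVec_smul, dotProduct_smul, smul_dotProduct]
  rw [single_dotProduct, Matrix.mulVec_single_one]
  rw [dotProduct_add, dotProduct_smul, dotProduct_single]
  simp only [Pi.add_apply, smul_eq_mul, mul_one, one_mul, Matrix.col_apply]
  ring

lemma dist_update_sq {n : ℕ} (y w : Fin n → ℝ) (j : Fin n) (t : ℝ) :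
    (Function.update y j (y j + t) - w) ⬝ᵥ (Function.update y j (y j + t) - w) =
      (y - w) ⬝ᵥ (y - w) + 2 * t * (y j - w j) + t ^ 2 := by
  rw [update_eq_add_single]
  have h1 : y + t • (Pi.single j 1 : Fin n → ℝ) - w = (y - w) + t • (Pi.single j 1 : Fin n → ℝ) := by ring_nf
  rw [h1, add_dotProduct, dotProduct_add, dotProduct_add,
    smul_dotProduct, dotProduct_smul, dotProduct_smul,
    single_dotProduct, dotProduct_single]
  have h3 : (t • (Pi.single j 1 : Fin n → ℝ)) ⬝ᵥ (Pi.single j 1 : Fin n → ℝ) = t := by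
    simp [dotProduct, Pi.single_apply, mul_ite, Finset.sum_ite_eq']
  rw [h3]
  have h2 : ((Pi.single j 1 : Fin n → ℝ)) j = 1 := by simp
  simp only [h2, smul_eq_mul, one_mul, mul_one, Pi.sub_apply]
  ring

lemma sum_restrict {n : ℕ} (S : Finset (Fin n)) (f : Fin n → ℝ)
    (hf : ∀ j ∉ S, f j = 0) : ∑ j, f j = ∑ j : {j // j ∈ S}, f j.1 := by
  rw [Finset.sum_coe_sort S f]
  exact (Finset.sum_subset S.subset_univ (fun j _ hj => hf j hj)).symm

/-- Theorem 3.9 (first part): if the last eigen-component of the step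
`(x^{N+1} − x^N)|_S` is nonzero, then `Q_SS` is positive definite. -/
theorem ppa_last_eigencomponent_nonzero_posdef {n : ℕ} (hn : 1 ≤ n)
    (l u : Fin n → EReal)
    (hl : ∀ j, l j ≠ ⊤) (hu : ∀ j, u j ≠ ⊥) (hlu : ∀ j, l j < u j)
    (Q : Matrix (Fin n) (Fin n) ℝ) (hQ : Q.IsSymm) (r : Fin n → ℝ)
    (γ : ℝ) (hγ : 0 < γ)
    (hpd : (Q + γ • (1 : Matrix (Fin n) (Fin n) ℝ)).PosDef)
    (hbdd : ∃ B : ℝ, ∀ z, inBox l u z → B ≤ qf Q r z)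
    (x : ℕ → Fin n → ℝ) (hmem : ∀ k, inBox l u (x k))
    (hppa : ∀ k, ∀ z, inBox l u z →
      qf Q r (x (k + 1)) + γ / 2 * vnorm (x (k + 1) - x k) ^ 2 ≤
        qf Q r z + γ / 2 * vnorm (z - x k) ^ 2)
    (xbar : Fin n → ℝ) (hxbar : inBox l u xbar)
    (hconv : Tendsto x atTop (𝓝 xbar))
    (hkkt : kktStrict l u Q r xbar)
    (S : Finset (Fin n))
    (hS : ∀ j, j ∈ S ↔ (l j < (xbar j : EReal) ∧ (xbar j : EReal) < u j))
    (hcard : 0 < S.card)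
    (lam : Fin S.card → ℝ) (v : Fin S.card → {j // j ∈ S} → ℝ)
    (hdec : ∀ i i' : Fin S.card, i ≤ i' → lam i' ≤ lam i)
    (heig : ∀ i, (Q.submatrix (Subtype.val : {j // j ∈ S} → Fin n)
      Subtype.val) *ᵥ v i = lam i • v i)
    (hortho : ∀ i i', v i ⬝ᵥ v i' = if i = i' then (1 : ℝ) else 0)
    (N : ℕ)
    (hN : ∀ k, N ≤ k → ∀ j,
      ((x k j : EReal) = l j ↔ (xbar j : EReal) = l j) ∧
      ((x k j : EReal) = u j ↔ (xbar j : EReal) = u j))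
    (hne : v ⟨S.card - 1, Nat.sub_lt hcard Nat.one_pos⟩ ⬝ᵥ
      (fun j : {j // j ∈ S} => x (N + 1) j - x N j) ≠ 0) :
    (Q.submatrix (Subtype.val : {j // j ∈ S} → Fin n) Subtype.val).PosDef := by
  classical
  set ilast : Fin S.card := ⟨S.card - 1, Nat.sub_lt hcard Nat.one_pos⟩ with hilast
  have hQ' : Qᵀ = Q := hQ
  have hQsub : (Q.submatrix (Subtype.val : {j // j ∈ S} → Fin n) Subtype.val)ᵀ
      = Q.submatrix (Subtype.val : {j // j ∈ S} → Fin n) Subtype.val := by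
    rw [Matrix.transpose_submatrix, hQ']
  -- Step A: off-S coordinates are fixed for k ≥ N
  have hfixbar : ∀ j, j ∉ S → (xbar j : EReal) = l j ∨ (xbar j : EReal) = u j := by
    intro j hj
    rcases eq_or_lt_of_le (hxbar j).1 with h | h
    · exact Or.inl h.symm
    · rcases eq_or_lt_of_le (hxbar j).2 with h' | h'
      · exact Or.inr h'
      · exact absurd ((hS j).mpr ⟨h, h'⟩) hj
  have hfix : ∀ k, N ≤ k → ∀ j, j ∉ S → x k j = xbar j := by
    intro k hk j hj
    rcases hfixbar j hj with h | h
    · have h2 : (x k j : EReal) = l j := ((hN k hk j).1).mpr h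
      have h3 : (x k j : EReal) = (xbar j : EReal) := h2.trans h.symm
      exact_mod_cast h3
    · have h2 : (x k j : EReal) = u j := ((hN k hk j).2).mpr h
      have h3 : (x k j : EReal) = (xbar j : EReal) := h2.trans h.symm
      exact_mod_cast h3
  -- Step B: S coordinates of x k are interior for k ≥ N
  have hint : ∀ k, N ≤ k → ∀ j, j ∈ S →
      l j < (x k j : EReal) ∧ (x k j : EReal) < u j := by
    intro k hk j hj
    obtain ⟨h1, h2⟩ := (hS j).mp hj
    constructor
    · rcases eq_or_lt_of_le (hmem k j).1 with h | h
      · exact absurd (((hN k hk j).1).mp h.symm) h1.ne'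
      · exact h
    · rcases eq_or_lt_of_le (hmem k j).2 with h | h
      · exact absurd (((hN k hk j).2).mp h) h2.ne
      · exact h
  -- Step C: stationarity on S
  have hstat : ∀ k, N ≤ k → ∀ j, j ∈ S →
      (Q *ᵥ x (k+1) + r) j + γ * (x (k+1) j - x k j) = 0 := by
    intro k hk j hj
    obtain ⟨hl1, hl2⟩ := hint (k+1) (by omega) j hj
    obtain ⟨c, hc1, hc2⟩ : ∃ c : ℝ, c < x (k+1) j ∧ l j ≤ (c : EReal) := by
      by_cases hbot : l j = ⊥
      · exact ⟨x (k+1) j - 1, by linarith, by simp [hbot]⟩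
      · have hcoe : l j = ((l j).toReal : EReal) := (EReal.coe_toReal (hl j) hbot).symm
        refine ⟨(l j).toReal, ?_, hcoe.le⟩
        have h := hl1; rw [hcoe] at h; exact_mod_cast h
    obtain ⟨c', hc'1, hc'2⟩ : ∃ c' : ℝ, x (k+1) j < c' ∧ (c' : EReal) ≤ u j := by
      by_cases htop : u j = ⊤
      · exact ⟨x (k+1) j + 1, by linarith, by simp [htop]⟩
      · have hcoe : u j = ((u j).toReal : EReal) := (EReal.coe_toReal htop (hu j)).symm
        refine ⟨(u j).toReal, ?_, hcoe.ge⟩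
        have h := hl2; rw [hcoe] at h; exact_mod_cast h
    set ε := min (x (k+1) j - c) (c' - x (k+1) j) with hεdef
    have hεpos : 0 < ε := lt_min (by linarith) (by linarith)
    have hbox : ∀ t : ℝ, |t| ≤ ε →
        inBox l u (Function.update (x (k+1)) j (x (k+1) j + t)) := by
      intro t ht j'
      by_cases hjj : j' = j
      · subst hjj
        rw [Function.update_self]
        obtain ⟨ht1, ht2⟩ := abs_le.mp ht
        have he1 : ε ≤ x (k+1) j' - c := min_le_left _ _
        have he2 : ε ≤ c' - x (k+1) j' := min_le_right _ _
        constructor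
        · refine le_trans hc2 ?_
          exact_mod_cast (by linarith : c ≤ x (k+1) j' + t)
        · refine le_trans ?_ hc'2
          exact_mod_cast (by linarith : x (k+1) j' + t ≤ c')
      · rw [Function.update_of_ne hjj]
        exact hmem (k+1) j'
    have hkey : ∀ t : ℝ, |t| ≤ ε →
        0 ≤ t * ((Q *ᵥ x (k+1) + r) j + γ * (x (k+1) j - x k j))
          + t ^ 2 * (Q j j / 2 + γ / 2) := by
      intro t ht
      have h := hppa k _ (hbox t ht)
      rw [qf_update Q hQ' r (x (k+1)) j t] at h
      rw [vnorm_sq, vnorm_sq] at h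
      rw [dist_update_sq (x (k+1)) (x k) j t] at h
      have hs : (x (k+1) - x k) j = x (k+1) j - x k j := rfl
      nlinarith [h]
    exact quad_coeff_zero _ _ ε hεpos hkey
  -- the step restricted to S, and its eigen-component
  set d : ℕ → {j // j ∈ S} → ℝ := fun k jj => x (k+1) jj.1 - x k jj.1 with hd
  set cs : ℕ → ℝ := fun k => v ilast ⬝ᵥ d k with hcs
  have hcN : cs N ≠ 0 := hne
  have hdoff : ∀ k, N ≤ k → ∀ j, j ∉ S → x (k+1) j - x k j = 0 := by
    intro k hk j hj
    rw [hfix (k+1) (by omega) j hj, hfix k hk j hj, sub_self]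
  have hQd : ∀ k, N ≤ k → ∀ jj : {j // j ∈ S},
      (Q *ᵥ (x (k+2) - x (k+1))) jj.1 =
      ((Q.submatrix (Subtype.val : {j // j ∈ S} → Fin n) Subtype.val) *ᵥ d (k+1)) jj := by
    intro k hk jj
    show ∑ j', Q jj.1 j' * (x (k+2) j' - x (k+1) j')
        = ∑ j' : {j // j ∈ S}, Q jj.1 j'.1 * d (k+1) j'
    rw [sum_restrict S (fun j' => Q jj.1 j' * (x (k+2) j' - x (k+1) j'))
      (fun j' hj' => by
        show Q jj.1 j' * (x (k+2) j' - x (k+1) j') = 0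
        have h0 : x (k+2) j' - x (k+1) j' = 0 := hdoff (k+1) (by omega) j' hj'
        rw [h0, mul_zero])]
  -- recursion on eigen-component
  have hrec : ∀ k, N ≤ k → (lam ilast + γ) * cs (k+1) = γ * cs k := by
    intro k hk
    have hp : ∀ jj : {j // j ∈ S},
        ((Q.submatrix (Subtype.val : {j // j ∈ S} → Fin n) Subtype.val) *ᵥ d (k+1)) jj
          + γ * d (k+1) jj = γ * d k jj := by
      intro jj
      have h1 := hstat k hk jj.1 jj.2
      have h2 := hstat (k+1) (by omega) jj.1 jj.2
      have h4 := hQd k hk jj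
      have h3 : (Q *ᵥ (x (k+2) - x (k+1))) jj.1
          = (Q *ᵥ x (k+2)) jj.1 - (Q *ᵥ x (k+1)) jj.1 := by
        rw [Matrix.mulVec_sub]; rfl
      rw [h3] at h4
      simp only [Pi.add_apply] at h1 h2
      show ((Q.submatrix (Subtype.val : {j // j ∈ S} → Fin n) Subtype.val) *ᵥ d (k+1)) jj
          + γ * (x (k+2) jj.1 - x (k+1) jj.1) = γ * (x (k+1) jj.1 - x k jj.1)
      rw [← h4]
      linarith
    have hvec : (Q.submatrix (Subtype.val : {j // j ∈ S} → Fin n) Subtype.val) *ᵥ d (k+1)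
        + γ • d (k+1) = γ • d k := by
      funext jj
      have := hp jj
      simpa [Pi.add_apply, Pi.smul_apply, smul_eq_mul] using this
    have hdot := congrArg (fun w => v ilast ⬝ᵥ w) hvec
    simp only [dotProduct_add, dotProduct_smul, smul_eq_mul] at hdot
    rw [dot_symm_mulVec _ hQsub, heig ilast, smul_dotProduct, smul_eq_mul] at hdot
    show (lam ilast + γ) * (v ilast ⬝ᵥ d (k+1)) = γ * (v ilast ⬝ᵥ d k)
    linarith [hdot]
  -- smallest eigenvalue plus γ is positive
  have hlg : 0 < lam ilast + γ := by
    set w : Fin n → ℝ := fun j => if h : j ∈ S then v ilast ⟨j, h⟩ else 0 with hw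
    have hwS : ∀ jj : {j // j ∈ S}, w jj.1 = v ilast jj := by
      intro jj; simp only [hw, dif_pos jj.2]
    have hwoff : ∀ j, j ∉ S → w j = 0 := by
      intro j hj; simp only [hw, dif_neg hj]
    have hvv : v ilast ⬝ᵥ v ilast = 1 := by
      have := hortho ilast ilast; rwa [if_pos rfl] at this
    have hw0 : w ≠ 0 := by
      intro h0
      have hz : v ilast = 0 := by
        funext jj
        show v ilast jj = 0
        calc v ilast jj = w jj.1 := (hwS jj).symm
          _ = 0 := congrFun h0 jj.1
      rw [hz] at hvv
      simp [dotProduct] at hvv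
    have hww : w ⬝ᵥ w = 1 := by
      rw [dotProduct,
        sum_restrict S (fun j => w j * w j)
          (fun j hj => by show w j * w j = 0; rw [hwoff j hj, mul_zero])]
      rw [← hvv, dotProduct]
      exact Finset.sum_congr rfl fun jj _ => by rw [hwS jj]
    have hQw : ∀ jj : {j // j ∈ S}, (Q *ᵥ w) jj.1 = lam ilast * v ilast jj := by
      intro jj
      show ∑ j', Q jj.1 j' * w j' = lam ilast * v ilast jj
      rw [sum_restrict S (fun j' => Q jj.1 j' * w j')
        (fun j' hj' => by show Q jj.1 j' * w j' = 0; rw [hwoff j' hj', mul_zero])]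
      have hsub : ∑ jj' : {j // j ∈ S}, Q jj.1 jj'.1 * w jj'.1
          = ∑ jj' : {j // j ∈ S},
            (Q.submatrix (Subtype.val : {j // j ∈ S} → Fin n) Subtype.val) jj jj' * v ilast jj' :=
        Finset.sum_congr rfl fun jj' _ => by rw [hwS jj', Matrix.submatrix_apply]
      rw [hsub]
      have hmv : ∑ jj' : {j // j ∈ S},
          (Q.submatrix (Subtype.val : {j // j ∈ S} → Fin n) Subtype.val) jj jj' * v ilast jj'
          = ((Q.submatrix (Subtype.val : {j // j ∈ S} → Fin n) Subtype.val) *ᵥ v ilast) jj := rfl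
      rw [hmv, heig ilast]
      simp [smul_eq_mul]
    have hwQw : w ⬝ᵥ Q *ᵥ w = lam ilast := by
      rw [dotProduct,
        sum_restrict S (fun j => w j * (Q *ᵥ w) j)
          (fun j hj => by show w j * (Q *ᵥ w) j = 0; rw [hwoff j hj, zero_mul])]
      have h1 : ∑ jj : {j // j ∈ S}, w jj.1 * (Q *ᵥ w) jj.1
          = ∑ jj : {j // j ∈ S}, lam ilast * (v ilast jj * v ilast jj) := by
        exact Finset.sum_congr rfl fun jj _ => by rw [hwS jj, hQw jj]; ring
      rw [h1, ← Finset.mul_sum]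
      have h2 : ∑ jj : {j // j ∈ S}, v ilast jj * v ilast jj = 1 := hvv
      rw [h2, mul_one]
    have hq := hpd.dotProduct_mulVec_pos hw0
    have hq2 : 0 < w ⬝ᵥ (Q + γ • (1 : Matrix (Fin n) (Fin n) ℝ)) *ᵥ w := by
      simpa using hq
    rw [Matrix.add_mulVec, dotProduct_add, hwQw] at hq2
    have h3 : w ⬝ᵥ (γ • (1 : Matrix (Fin n) (Fin n) ℝ)) *ᵥ w = γ := by
      rw [Matrix.smul_mulVec, Matrix.one_mulVec, dotProduct_smul,
        smul_eq_mul, hww, mul_one]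
    rw [h3] at hq2
    exact hq2
  -- eigen-components tend to zero
  have hcz : Tendsto cs atTop (𝓝 0) := by
    have hcoord : ∀ j : Fin n, Tendsto (fun k => x k j) atTop (𝓝 (xbar j)) :=
      fun j => (tendsto_pi_nhds.mp hconv) j
    have hd0 : ∀ jj : {j // j ∈ S}, Tendsto (fun k => d k jj) atTop (𝓝 0) := by
      intro jj
      have h1 : Tendsto (fun k => x (k+1) jj.1) atTop (𝓝 (xbar jj.1)) :=
        (hcoord jj.1).comp (tendsto_add_atTop_nat 1)
      have := h1.sub (hcoord jj.1)
      simpa using this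
    have hsum : Tendsto (fun k => ∑ jj : {j // j ∈ S}, v ilast jj * d k jj) atTop
        (𝓝 (∑ jj : {j // j ∈ S}, v ilast jj * 0)) :=
      tendsto_finset_sum _ (fun jj _ => tendsto_const_nhds.mul (hd0 jj))
    simpa [dotProduct, hcs] using hsum
  -- conclude the smallest eigenvalue is positive
  have hlam_pos : 0 < lam ilast := by
    by_contra hle
    push_neg at hle
    have hρ : 1 ≤ γ / (lam ilast + γ) := by
      rw [le_div_iff₀ hlg]; linarith
    have hstep : ∀ k, N ≤ k → |cs k| ≤ |cs (k+1)| := by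
      intro k hk
      have h := hrec k hk
      have heq : cs (k+1) = γ / (lam ilast + γ) * cs k := by
        field_simp
        linarith [h]
      rw [heq, abs_mul, abs_of_pos (lt_of_lt_of_le zero_lt_one hρ)]
      nlinarith [abs_nonneg (cs k)]
    have hmono : ∀ m : ℕ, |cs N| ≤ |cs (N + m)| := by
      intro m
      induction m with
      | zero => simp
      | succ m ih =>
        have := hstep (N + m) (by omega)
        calc |cs N| ≤ |cs (N + m)| := ih
          _ ≤ |cs (N + m + 1)| := this
          _ = |cs (N + (m + 1))| := by ring_nf
    have hcNpos : 0 < |cs N| := abs_pos.mpr hcN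
    obtain ⟨K, hK⟩ := (Metric.tendsto_atTop.mp hcz) (|cs N|) hcNpos
    have h1 := hK (N + K) (by omega)
    have h2 := hmono K
    rw [Real.dist_eq, sub_zero] at h1
    linarith
  -- all eigenvalues are positive
  have hpos : ∀ i, 0 < lam i := by
    intro i
    refine lt_of_lt_of_le hlam_pos (hdec i ilast ?_)
    rw [Fin.le_def]
    have := i.2
    simp only [hilast]
    omega
  exact posdef_of_eig (Fintype.card_coe S) _ hQsub lam v heig hortho hpos
end
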